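/- arXiv:1305.0669 — 4 statements merged into one kernel-verified Lean document; each statement's English description precedes it below -/
import Mathlib

section
/- For the path access graph on N ≥ k+1 vertices, the sequence I_n = ⟨1,2,…,k,k+1,k,…,2⟩^n satisfies LRU(I_n) = 2n + k − 1 and FWF(I_n) = 2kn, hence lim_{n→∞} (FWF(I_n) − LRU(I_n))/|I_n| = (k−1)/k. -/
/-- One step of LRU with cache size `k`: cache is a list of pages, most
recently used first; returns the new cache and whether the request faulted. -/
def lruStep (k : ℕ) (c : List ℕ) (p : ℕ) : List ℕ × Bool :=
  if p ∈ c then (p :: c.erase p, false) else ((p :: c).take k, true)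

/-- One step of FIFO with cache size `k`: cache is a list of pages, most
recently entered first. -/
def fifoStep (k : ℕ) (c : List ℕ) (p : ℕ) : List ℕ × Bool :=
  if p ∈ c then (c, false) else ((p :: c).take k, true)

/-- One step of FWF (flush-when-full) with cache size `k`. -/
def fwfStep (k : ℕ) (c : List ℕ) (p : ℕ) : List ℕ × Bool :=
  if p ∈ c then (c, false)
  else if c.length = k then ([p], true) else (p :: c, true)

/-- Number of faults incurred by an algorithm given by `step`, starting from
an empty cache, on the request sequence `I`. -/
def runCost (step : List ℕ → ℕ → List ℕ × Bool) (I : List ℕ) : ℕ :=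
  (I.foldl (fun s p => ((step s.1 p).1, s.2 + if (step s.1 p).2 then 1 else 0))
    (([] : List ℕ), 0)).2

/-- Number of faults of LRU with cache size `k` on sequence `I`. -/
def lruCost (k : ℕ) (I : List ℕ) : ℕ := runCost (lruStep k) I

/-- Number of faults of FIFO with cache size `k` on sequence `I`. -/
def fifoCost (k : ℕ) (I : List ℕ) : ℕ := runCost (fifoStep k) I

/-- Number of faults of FWF with cache size `k` on sequence `I`. -/
def fwfCost (k : ℕ) (I : List ℕ) : ℕ := runCost (fwfStep k) I

/-- `n`-fold concatenation of the list `l`. -/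
def repeatList (l : List ℕ) (n : ℕ) : List ℕ := (List.replicate n l).flatten

/-- The block `⟨1, 2, …, k, k+1, k, …, 2⟩` of length `2k` on the path graph. -/
def pathBlock (k : ℕ) : List ℕ := List.range' 1 (k + 1) ++ (List.range' 2 (k - 1)).reverse

/-- `I_n = ⟨1, 2, …, k, k+1, k, …, 2⟩^n`. -/
def pathSeq (k n : ℕ) : List ℕ := repeatList (pathBlock k) n

/-!
From the second block on, both algorithms start every block with the cache `⟨2, …, k+1⟩`.
LRU then faults only on `1` (evicting `k+1`) and on `k+1` (evicting `1`): every other request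
of the block is a hit that merely reorders the cache. FWF finds its cache full at both of these
requests, flushes it, and then faults on each of the `k-1` pages that follow. From the empty cache
the first block costs LRU `k+1` faults and FWF `2k`.
-/

section Run

variable (step : List ℕ → ℕ → List ℕ × Bool)

def runFrom : List ℕ → List ℕ → List ℕ × ℕ
  | c, [] => (c, 0)
  | c, p :: I =>
    ((runFrom (step c p).1 I).1, (if (step c p).2 then 1 else 0) + (runFrom (step c p).1 I).2)

lemma foldl_eq_runFrom (I c : List ℕ) (m : ℕ) :
    I.foldl (fun s p => ((step s.1 p).1, s.2 + if (step s.1 p).2 then 1 else 0)) (c, m)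
      = ((runFrom step c I).1, m + (runFrom step c I).2) := by
  induction I generalizing c m with
  | nil => rfl
  | cons p I ih => simp only [List.foldl_cons, ih, runFrom, Nat.add_assoc]

lemma runCost_eq_runFrom (I : List ℕ) : runCost step I = (runFrom step [] I).2 := by
  simp only [runCost, foldl_eq_runFrom, Nat.zero_add]

variable {step}

lemma runFrom_cons {c c' c'' I : List ℕ} {p m : ℕ} {b : Bool} (h : step c p = (c', b))
    (hI : runFrom step c' I = (c'', m)) :
    runFrom step c (p :: I) = (c'', (if b then 1 else 0) + m) := by
  simp [runFrom, h, hI]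

lemma runFrom_append {c c₁ c₂ I₁ I₂ : List ℕ} {m₁ m₂ : ℕ} (h₁ : runFrom step c I₁ = (c₁, m₁))
    (h₂ : runFrom step c₁ I₂ = (c₂, m₂)) : runFrom step c (I₁ ++ I₂) = (c₂, m₁ + m₂) := by
  induction I₁ generalizing c m₁ with
  | nil =>
    obtain ⟨rfl, rfl⟩ := Prod.mk.inj h₁
    simpa using h₂
  | cons p I ih =>
    obtain ⟨hc, hm⟩ := Prod.mk.inj h₁
    rw [List.cons_append, runFrom_cons (Prod.mk.eta (p := step c p)).symm
      (ih (Prod.ext hc rfl)), ← hm, Nat.add_assoc]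

lemma runFrom_repeatList {c B : List ℕ} {m : ℕ} (h : runFrom step c B = (c, m)) (n : ℕ) :
    runFrom step c (repeatList B n) = (c, n * m) := by
  induction n with
  | zero => simp [repeatList, runFrom]
  | succ n ih =>
    rw [repeatList] at ih
    rw [repeatList, List.replicate_succ, List.flatten_cons, runFrom_append h ih, Nat.succ_mul,
      Nat.add_comm]

lemma runFrom_repeatList_succ {c₀ c B : List ℕ} {m₀ m : ℕ} (h₀ : runFrom step c₀ B = (c, m₀))
    (h : runFrom step c B = (c, m)) (n : ℕ) :
    runFrom step c₀ (repeatList B (n + 1)) = (c, m₀ + n * m) := by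
  rw [repeatList, List.replicate_succ, List.flatten_cons]
  exact runFrom_append h₀ (runFrom_repeatList h n)

lemma runFrom_of_insert {k : ℕ}
    (hstep : ∀ c p, p ∉ c → c.length < k → step c p = (p :: c, true))
    {c l : List ℕ} (hl : l.Nodup) (hdisj : l.Disjoint c) (hlen : c.length + l.length ≤ k) :
    runFrom step c l = (l.reverse ++ c, l.length) := by
  induction l generalizing c with
  | nil => rfl
  | cons p l ih =>
    obtain ⟨hp, hl⟩ := List.nodup_cons.mp hl
    obtain ⟨hpc, hdisj⟩ := List.disjoint_cons_left.mp hdisj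
    have := runFrom_cons (hstep c p hpc (by simp at hlen; omega))
      (ih (c := p :: c) hl (List.disjoint_cons_right.mpr ⟨hp, hdisj⟩)
        (by simp at hlen ⊢; omega))
    simpa [Nat.add_comm] using this

end Run

section Steps

variable {k p q : ℕ} {c : List ℕ}

lemma lruStep_of_not_mem_of_length_lt (hp : p ∉ c) (hc : c.length < k) :
    lruStep k c p = (p :: c, true) := by
  simp [lruStep, hp, List.take_of_length_le (show (p :: c).length ≤ k by simpa)]

lemma lruStep_append_singleton_of_not_mem (hp : p ∉ c ++ [q]) (hc : c.length + 1 = k) :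
    lruStep k (c ++ [q]) p = (p :: c, true) := by
  subst hc
  simp [lruStep, hp]

/-- `s` is the part of the run already served: each hit moves the next page of `l` from behind
`s.reverse` to the front. -/
lemma runFrom_lruStep_of_nodup {s l : List ℕ} (hs : (s ++ l).Nodup) :
    runFrom (lruStep k) (s.reverse ++ l) l = ((s ++ l).reverse, 0) := by
  induction l generalizing s with
  | nil => simp [runFrom]
  | cons p l ih =>
    have hps : p ∉ s.reverse := fun h => (List.nodup_append.mp hs).2.2 _ (by simpa using h) _
      List.mem_cons_self rfl
    have hstep : lruStep k (s.reverse ++ p :: l) p = ((s ++ [p]).reverse ++ l, false) := by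
      simp [lruStep, List.erase_append_right _ hps]
    simpa using runFrom_cons hstep (ih (s := s ++ [p]) (by simpa using hs))

lemma fwfStep_of_not_mem_of_length_lt (hp : p ∉ c) (hc : c.length < k) :
    fwfStep k c p = (p :: c, true) := by
  simp [fwfStep, hp, hc.ne]

lemma fwfStep_of_not_mem_of_length_eq (hp : p ∉ c) (hc : c.length = k) :
    fwfStep k c p = ([p], true) := by
  simp [fwfStep, hp, hc]

end Steps

section PathBlock

/- Here `k = m + 1`, and `List.range' 2 m ++ [m + 2]` is the cache `⟨2, …, k+1⟩` with which
every block after the first starts. -/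

variable (m : ℕ)

lemma pathBlock_succ :
    pathBlock (m + 1) = 1 :: List.range' 2 m ++ (m + 2) :: (List.range' 2 m).reverse := by
  rw [pathBlock, List.range'_succ, List.range'_concat]
  simp [Nat.add_comm]

lemma length_pathSeq {k : ℕ} (hk : 1 ≤ k) (n : ℕ) : (pathSeq k n).length = 2 * k * n := by
  obtain ⟨m, rfl⟩ : ∃ m, k = m + 1 := ⟨k - 1, by omega⟩
  simp [pathSeq, repeatList, pathBlock_succ]
  ring

lemma runFrom_lruStep_ascent_of_steady :
    runFrom (lruStep (m + 1)) (List.range' 2 m ++ [m + 2]) (1 :: List.range' 2 m)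
      = ((List.range' 2 m).reverse ++ [1], 1) := by
  simpa using runFrom_cons (lruStep_append_singleton_of_not_mem (p := 1) (by simp) (by simp))
    (runFrom_lruStep_of_nodup (s := [1]) (l := List.range' 2 m) (by simp [List.nodup_range']))

lemma runFrom_lruStep_ascent_of_nil :
    runFrom (lruStep (m + 1)) [] (1 :: List.range' 2 m)
      = ((List.range' 2 m).reverse ++ [1], m + 1) := by
  simpa using runFrom_of_insert (fun _ _ => lruStep_of_not_mem_of_length_lt)
    (l := 1 :: List.range' 2 m) (by simp [List.nodup_range']) (List.disjoint_nil_right _) (by simp)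

lemma runFrom_lruStep_descent :
    runFrom (lruStep (m + 1)) ((List.range' 2 m).reverse ++ [1])
        ((m + 2) :: (List.range' 2 m).reverse)
      = (List.range' 2 m ++ [m + 2], 1) := by
  simpa using runFrom_cons
    (lruStep_append_singleton_of_not_mem (p := m + 2) (by simp; omega) (by simp))
    (runFrom_lruStep_of_nodup (s := [m + 2]) (l := (List.range' 2 m).reverse)
      (by simp [List.nodup_range']; omega))

lemma runFrom_fwfStep_ascent_of_steady :
    runFrom (fwfStep (m + 1)) (List.range' 2 m ++ [m + 2]) (1 :: List.range' 2 m)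
      = ((List.range' 2 m).reverse ++ [1], m + 1) := by
  simpa [Nat.add_comm] using runFrom_cons
    (fwfStep_of_not_mem_of_length_eq (p := 1) (by simp) (by simp))
    (runFrom_of_insert (fun _ _ => fwfStep_of_not_mem_of_length_lt) (c := [1])
      (l := List.range' 2 m) List.nodup_range' (by simp) (by simp; omega))

lemma runFrom_fwfStep_ascent_of_nil :
    runFrom (fwfStep (m + 1)) [] (1 :: List.range' 2 m)
      = ((List.range' 2 m).reverse ++ [1], m + 1) := by
  simpa using runFrom_of_insert (fun _ _ => fwfStep_of_not_mem_of_length_lt)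
    (l := 1 :: List.range' 2 m) (by simp [List.nodup_range']) (List.disjoint_nil_right _) (by simp)

lemma runFrom_fwfStep_descent :
    runFrom (fwfStep (m + 1)) ((List.range' 2 m).reverse ++ [1])
        ((m + 2) :: (List.range' 2 m).reverse)
      = (List.range' 2 m ++ [m + 2], m + 1) := by
  simpa [Nat.add_comm] using runFrom_cons
    (fwfStep_of_not_mem_of_length_eq (p := m + 2) (by simp; omega) (by simp))
    (runFrom_of_insert (fun _ _ => fwfStep_of_not_mem_of_length_lt) (c := [m + 2])
      (l := (List.range' 2 m).reverse) (by simp [List.nodup_range']) (by simp; omega)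
      (by simp; omega))

lemma runFrom_lruStep_pathBlock_of_nil :
    runFrom (lruStep (m + 1)) [] (pathBlock (m + 1))
      = (List.range' 2 m ++ [m + 2], m + 1 + 1) := by
  rw [pathBlock_succ]
  exact runFrom_append (runFrom_lruStep_ascent_of_nil m) (runFrom_lruStep_descent m)

lemma runFrom_lruStep_pathBlock_of_steady :
    runFrom (lruStep (m + 1)) (List.range' 2 m ++ [m + 2]) (pathBlock (m + 1))
      = (List.range' 2 m ++ [m + 2], 2) := by
  rw [pathBlock_succ]
  exact runFrom_append (runFrom_lruStep_ascent_of_steady m) (runFrom_lruStep_descent m)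

lemma runFrom_fwfStep_pathBlock_of_nil :
    runFrom (fwfStep (m + 1)) [] (pathBlock (m + 1))
      = (List.range' 2 m ++ [m + 2], 2 * (m + 1)) := by
  rw [pathBlock_succ, two_mul]
  exact runFrom_append (runFrom_fwfStep_ascent_of_nil m) (runFrom_fwfStep_descent m)

lemma runFrom_fwfStep_pathBlock_of_steady :
    runFrom (fwfStep (m + 1)) (List.range' 2 m ++ [m + 2]) (pathBlock (m + 1))
      = (List.range' 2 m ++ [m + 2], 2 * (m + 1)) := by
  rw [pathBlock_succ, two_mul]
  exact runFrom_append (runFrom_fwfStep_ascent_of_steady m) (runFrom_fwfStep_descent m)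

end PathBlock

lemma lruCost_pathSeq {k n : ℕ} (hk : 1 ≤ k) (hn : 1 ≤ n) :
    lruCost k (pathSeq k n) = 2 * n + k - 1 := by
  obtain ⟨m, rfl⟩ : ∃ m, k = m + 1 := ⟨k - 1, by omega⟩
  obtain ⟨n, rfl⟩ : ∃ n', n = n' + 1 := ⟨n - 1, by omega⟩
  rw [lruCost, runCost_eq_runFrom, pathSeq, runFrom_repeatList_succ
    (runFrom_lruStep_pathBlock_of_nil m) (runFrom_lruStep_pathBlock_of_steady m)]
  omega

lemma fwfCost_pathSeq {k n : ℕ} (hk : 1 ≤ k) (hn : 1 ≤ n) :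
    fwfCost k (pathSeq k n) = 2 * k * n := by
  obtain ⟨m, rfl⟩ : ∃ m, k = m + 1 := ⟨k - 1, by omega⟩
  obtain ⟨n, rfl⟩ : ∃ n', n = n' + 1 := ⟨n - 1, by omega⟩
  rw [fwfCost, runCost_eq_runFrom, pathSeq, runFrom_repeatList_succ
    (runFrom_fwfStep_pathBlock_of_nil m) (runFrom_fwfStep_pathBlock_of_steady m)]
  ring

open Filter Topology in
lemma tendsto_cost_gap_div_length (k : ℝ) (hk : k ≠ 0) :
    Tendsto (fun n : ℕ => (2 * k * n - (2 * n + k - 1)) / (2 * k * n)) atTop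
      (𝓝 ((k - 1) / k)) := by
  have hlim : Tendsto (fun n : ℕ => (k - 1) / k - (k - 1) / (2 * k) * (1 / (n : ℝ))) atTop
      (𝓝 ((k - 1) / k)) := by
    simpa using tendsto_const_nhds.sub
      (tendsto_one_div_atTop_nhds_zero_nat.const_mul ((k - 1) / (2 * k)))
  refine hlim.congr' ?_
  filter_upwards [eventually_ne_atTop 0] with n hn
  field_simp
  ring

open Filter in
theorem stmt4_general (k : ℕ) (hk : 2 ≤ k) :
    (∀ n, 1 ≤ n →
      lruCost k (pathSeq k n) = 2 * n + k - 1 ∧ fwfCost k (pathSeq k n) = 2 * k * n) ∧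
    Tendsto
      (fun n : ℕ =>
        ((fwfCost k (pathSeq k n) : ℝ) - (lruCost k (pathSeq k n) : ℝ)) /
          ((pathSeq k n).length : ℝ))
      atTop (nhds (((k : ℝ) - 1) / k)) := by
  have hk₁ : 1 ≤ k := by omega
  refine ⟨fun n hn => ⟨lruCost_pathSeq hk₁ hn, fwfCost_pathSeq hk₁ hn⟩, ?_⟩
  refine (tendsto_cost_gap_div_length k (by positivity)).congr' ?_
  filter_upwards [eventually_ge_atTop 1] with n hn
  rw [lruCost_pathSeq hk₁ hn, fwfCost_pathSeq hk₁ hn, length_pathSeq hk₁,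
    Nat.cast_sub (by omega)]
  push_cast
  rfl

open Filter in
/-- On the path access graph with `N ≥ k+1` vertices, the sequence
`I_n = ⟨1,…,k,k+1,k,…,2⟩^n` satisfies `LRU(I_n) = 2n + k − 1` and
`FWF(I_n) = 2kn`, hence `(FWF(I_n) − LRU(I_n))/|I_n| → (k−1)/k`. -/
theorem stmt4 (k N : ℕ) (hk : 2 ≤ k) (hN : k + 1 ≤ N) :
    (∀ n, 1 ≤ n →
      lruCost k (pathSeq k n) = 2 * n + k - 1 ∧ fwfCost k (pathSeq k n) = 2 * k * n) ∧
    Tendsto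
      (fun n : ℕ =>
        ((fwfCost k (pathSeq k n) : ℝ) - (lruCost k (pathSeq k n) : ℝ)) /
          ((pathSeq k n).length : ℝ))
      atTop (nhds (((k : ℝ) - 1) / k)) :=
  stmt4_general k hk
end

section
/- For the star graph S_N with N ≥ k+1, every complete k-phase of a request sequence respecting S_N has length at least 2(k−1). -/
/-!
Between two distinct leaves of the star every walk passes through the center, so a walk `m`
visits at most `(|m| + 1) / 2` distinct leaves. Extending a complete `k`-phase `l` by the new
request `q` gives a walk with `k + 1` distinct pages, hence at least `k` distinct leaves, so
`2k ≤ |l| + 2`.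
-/

/-- A request sequence respects the star graph `S_N` (center `0`, leaves
`1, …, N−1`) if all pages are among `0, …, N−1` and any two consecutive
requests are equal or adjacent in the star (i.e. one of them is the center). -/
def RespectsStar (N : ℕ) (I : List ℕ) : Prop :=
  (∀ p ∈ I, p < N) ∧ I.Chain' (fun p q => p = q ∨ p = 0 ∨ q = 0)

def StarAdj (p q : ℕ) : Prop := p = q ∨ p = 0 ∨ q = 0

theorem two_mul_card_leaves_le_length_add_one :
    ∀ m : List ℕ, m.IsChain StarAdj → 2 * (m.toFinset.erase 0).card ≤ m.length + 1
  | [], _ => by simp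
  | [a], _ => by
    have : ({a} : Finset ℕ).erase 0 ⊆ {a} := Finset.erase_subset _ _
    simpa using Finset.card_le_card this
  | 0 :: b :: t, h => by
    have ih := two_mul_card_leaves_le_length_add_one (b :: t) h.tail
    simp only [List.toFinset_cons, Finset.erase_insert_eq_erase, List.length_cons] at ih ⊢
    omega
  | (a + 1) :: b :: t, h => by
    rcases (List.isChain_cons_cons.mp h).1 with rfl | ha | rfl
    · have ih := two_mul_card_leaves_le_length_add_one ((a + 1) :: t) h.tail
      simp only [List.toFinset_cons, Finset.insert_idem, List.length_cons] at ih ⊢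
      omega
    · exact absurd ha (Nat.succ_ne_zero a)
    · have ih := two_mul_card_leaves_le_length_add_one t h.tail.tail
      have hsub : (((a + 1) :: 0 :: t).toFinset.erase 0) ⊆ insert (a + 1) (t.toFinset.erase 0) := by
        intro x
        simp only [List.toFinset_cons, Finset.mem_erase, Finset.mem_insert, List.mem_toFinset]
        tauto
      have := (Finset.card_le_card hsub).trans (Finset.card_insert_le _ _)
      simp only [List.length_cons]
      omega

theorem stmt8_general (k N : ℕ)
    (I : List ℕ) (hresp : RespectsStar N I)
    (pre l post : List ℕ) (q : ℕ) (hI : I = pre ++ l ++ q :: post)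
    (hcard : l.toFinset.card = k) (hq : q ∉ l.toFinset) :
    2 * (k - 1) ≤ l.length := by
  have hchain : (l ++ [q]).IsChain StarAdj := by
    refine List.IsChain.infix hresp.2 ⟨pre, post, ?_⟩
    simp [hI]
  have hcard' : (l ++ [q]).toFinset.card = k + 1 := by
    have : (l ++ [q]).toFinset = insert q l.toFinset := by ext; simp
    rw [this, Finset.card_insert_of_notMem hq, hcard]
  have hleaves := two_mul_card_leaves_le_length_add_one _ hchain
  have hpred := Finset.pred_card_le_card_erase (s := (l ++ [q]).toFinset) (a := 0)
  rw [hcard'] at hpred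
  rw [List.length_append, List.length_singleton] at hleaves
  omega

/-- For the star graph `S_N` with `N ≥ k + 1`, every complete `k`-phase of a
request sequence respecting `S_N` has length at least `2(k−1)`.  A complete
`k`-phase is a contiguous segment `l` with exactly `k` distinct pages that is
maximal, i.e. the request `q` immediately following it is to a new page. -/
theorem stmt8 (k N : ℕ) (hk : 2 ≤ k) (hN : k + 1 ≤ N)
    (I : List ℕ) (hresp : RespectsStar N I)
    (pre l post : List ℕ) (q : ℕ) (hI : I = pre ++ l ++ q :: post)
    (hcard : l.toFinset.card = k) (hq : q ∉ l.toFinset) :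
    2 * (k - 1) ≤ l.length :=
  stmt8_general k N I hresp pre l post q hI hcard hq
end

section
/- On the star graph, for the sequence I_n = ⟨P, (B_1, B_2)^n⟩ with P = ⟨1,s,2,s,…,k−1,s⟩, B_1 = ⟨k,s,k−1,s,…,2,s⟩, B_2 = ⟨1,s,2,s,…,k−1,s⟩, LRU faults exactly on the first request of each B_i (plus k faults on P), so LRU(I_n) = 2n + k, while FWF(I_n) = 2kn + k, giving lim (FWF(I_n) − LRU(I_n))/|I_n| = 1/2. -/
/-- `P = ⟨1, s, 2, s, …, k−1, s⟩` on the star graph, with center `s = 0`. -/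
def starP (k : ℕ) : List ℕ := (List.range' 1 (k - 1)).flatMap (fun i => [i, 0])

/-- `B₁ = ⟨k, s, k−1, s, …, 2, s⟩` on the star graph, with center `s = 0`. -/
def starB1 (k : ℕ) : List ℕ := ((List.range' 2 (k - 1)).reverse).flatMap (fun i => [i, 0])

/-- `I_n = ⟨P, (B₁, B₂)^n⟩` where `B₂ = P = ⟨1, s, 2, s, …, k−1, s⟩`. -/
def starSeq9 (k n : ℕ) : List ℕ := starP k ++ repeatList (starB1 k ++ starP k) n

/-!
Every leaf request is followed by a request to the center, so LRU keeps the center as its most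
recently used page and, on the leaves, behaves like LRU with `k - 1` slots. Each phase `B_i`
brings exactly one leaf that is not cached; it evicts the least recently used leaf, which is
never requested in that phase, so the other `k - 2` leaves of the phase are hits: one fault per
phase. FWF, in contrast, finds its cache full at the first request of each phase, flushes it,
and then faults on the center and on each of the other `k - 2` leaves: `k` faults per phase.
After `B₁ B₂` both caches are back in the state reached after `P`, so the costs are linear in `n`.
-/

namespace StarPaging

def run (step : List ℕ → ℕ → List ℕ × Bool) : List ℕ → List ℕ → List ℕ
  | c, [] => c
  | c, p :: I => run step (step c p).1 I

def faults (step : List ℕ → ℕ → List ℕ × Bool) : List ℕ → List ℕ → ℕ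
  | _, [] => 0
  | c, p :: I => (if (step c p).2 then 1 else 0) + faults step (step c p).1 I

section Simulation

variable (step : List ℕ → ℕ → List ℕ × Bool)

theorem foldl_step_eq (I c : List ℕ) (f : ℕ) :
    I.foldl (fun s p => ((step s.1 p).1, s.2 + if (step s.1 p).2 then 1 else 0)) (c, f)
      = (run step c I, f + faults step c I) := by
  induction I generalizing c f with
  | nil => simp [run, faults]
  | cons p I ih => simp only [List.foldl_cons, ih, run, faults, Nat.add_assoc]

theorem runCost_eq_faults (I : List ℕ) : runCost step I = faults step [] I := by
  simp [runCost, foldl_step_eq]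

theorem run_append (c I J : List ℕ) : run step c (I ++ J) = run step (run step c I) J := by
  induction I generalizing c with
  | nil => rfl
  | cons p I ih => exact ih _

theorem faults_append (c I J : List ℕ) :
    faults step c (I ++ J) = faults step c I + faults step (run step c I) J := by
  induction I generalizing c with
  | nil => simp [run, faults]
  | cons p I ih => simp [run, faults, ih, Nat.add_assoc]

theorem run_faults_repeatList {c I : List ℕ} {f : ℕ} (hrun : run step c I = c)
    (hfaults : faults step c I = f) (n : ℕ) :
    run step c (repeatList I n) = c ∧ faults step c (repeatList I n) = n * f := by
  induction n with
  | zero => simp [repeatList, run, faults]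
  | succ n ih =>
    have hsucc : repeatList I (n + 1) = I ++ repeatList I n := by
      simp [repeatList, List.replicate_succ]
    rw [hsucc, run_append, faults_append, hrun, hfaults, ih.1, ih.2]
    exact ⟨rfl, by ring⟩

end Simulation

def withCenter (L : List ℕ) : List ℕ := L.flatMap fun i => [i, 0]

theorem withCenter_cons (i : ℕ) (L : List ℕ) : withCenter (i :: L) = [i, 0] ++ withCenter L :=
  List.flatMap_cons

theorem withCenter_append (L L' : List ℕ) :
    withCenter (L ++ L') = withCenter L ++ withCenter L' :=
  List.flatMap_append

theorem length_withCenter (L : List ℕ) : (withCenter L).length = 2 * L.length := by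
  induction L with
  | nil => rfl
  | cons i L ih => rw [withCenter_cons, List.length_append, ih]; simp; ring

theorem lru_withCenter (K : ℕ) (l J : List ℕ) (hJ : ∀ i ∈ J, i ≠ 0) :
    run (lruStep (K + 2)) (0 :: l) (withCenter J) = 0 :: run (lruStep (K + 1)) l J ∧
      faults (lruStep (K + 2)) (0 :: l) (withCenter J) = faults (lruStep (K + 1)) l J := by
  induction J generalizing l with
  | nil => exact ⟨rfl, rfl⟩
  | cons i J ih =>
    have hi : i ≠ 0 := hJ i (List.mem_cons_self ..)
    have ih' := fun l => ih l fun j hj => hJ j (List.mem_cons_of_mem _ hj)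
    by_cases hil : i ∈ l <;>
      simp [withCenter_cons, run, faults, lruStep, hil, hi, Ne.symm hi, ih']

theorem lru_fill (K : ℕ) {l J : List ℕ} (hJ : J.Nodup) (hJl : ∀ i ∈ J, i ∉ l)
    (hlen : l.length + J.length ≤ K) :
    run (lruStep K) l J = J.reverse ++ l ∧ faults (lruStep K) l J = J.length := by
  induction J generalizing l with
  | nil => exact ⟨rfl, rfl⟩
  | cons j J ih =>
    obtain ⟨hjJ, hJ⟩ := List.nodup_cons.1 hJ
    have hjl : j ∉ l := hJl j (List.mem_cons_self ..)
    have hstep : lruStep K l j = (j :: l, true) := by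
      rw [lruStep, if_neg hjl, List.take_of_length_le (by simp at hlen ⊢; omega)]
    obtain ⟨ihrun, ihfaults⟩ := ih (l := j :: l) hJ
      (fun i hi => by simpa [ne_of_mem_of_not_mem hi hjJ] using hJl i (List.mem_cons_of_mem _ hi))
      (by simp at hlen ⊢; omega)
    simp [run, faults, hstep, ihrun, ihfaults, Nat.add_comm]

theorem lru_hits (K : ℕ) {l J : List ℕ} (h : (l ++ J).Nodup) :
    run (lruStep K) (l ++ J) J = J.reverse ++ l ∧ faults (lruStep K) (l ++ J) J = 0 := by
  induction J generalizing l with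
  | nil => simp [run, faults]
  | cons j J ih =>
    have hjl : j ∉ l := fun hj => List.disjoint_of_nodup_append h hj (List.mem_cons_self ..)
    have hstep : lruStep K (l ++ j :: J) j = ((j :: l) ++ J, false) := by
      simp [lruStep, List.erase_append_right _ hjl]
    obtain ⟨ihrun, ihfaults⟩ := ih (l := j :: l) (List.perm_middle.nodup_iff.1 h)
    simp only [run, faults, hstep, ihrun, ihfaults]
    simp

theorem lru_miss_then_hits {K a b : ℕ} {J : List ℕ} (hJ : (a :: J).Nodup) (hab : a ≠ b)
    (hK : J.length + 1 = K) :
    run (lruStep K) (J ++ [b]) (a :: J) = J.reverse ++ [a] ∧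
      faults (lruStep K) (J ++ [b]) (a :: J) = 1 := by
  subst hK
  obtain ⟨haJ, hJ⟩ := List.nodup_cons.1 hJ
  have hstep : lruStep (J.length + 1) (J ++ [b]) a = ([a] ++ J, true) := by
    rw [lruStep, if_neg (by simp [haJ, hab]), List.take_succ_cons, List.take_left' rfl]
    rfl
  obtain ⟨hrun, hfaults⟩ := lru_hits (J.length + 1) (l := [a]) (List.nodup_cons.2 ⟨haJ, hJ⟩)
  simp only [run, faults, hstep, hrun, hfaults]
  simp

theorem fwf_fill (k : ℕ) {c J : List ℕ} (h0 : 0 ∈ c) (hJ : J.Nodup) (hJc : ∀ i ∈ J, i ∉ c)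
    (hlen : c.length + J.length ≤ k) :
    run (fwfStep k) c (withCenter J) = J.reverse ++ c ∧
      faults (fwfStep k) c (withCenter J) = J.length := by
  induction J generalizing c with
  | nil => exact ⟨rfl, rfl⟩
  | cons j J ih =>
    obtain ⟨hjJ, hJ⟩ := List.nodup_cons.1 hJ
    have hjc : j ∉ c := hJc j (List.mem_cons_self ..)
    have hstep : fwfStep k c j = (j :: c, true) := by
      rw [fwfStep, if_neg hjc, if_neg (by simp at hlen; omega)]
    have hcenter : fwfStep k (j :: c) 0 = (j :: c, false) := by
      simp [fwfStep, h0]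
    obtain ⟨ihrun, ihfaults⟩ := ih (c := j :: c) (List.mem_cons_of_mem _ h0) hJ
      (fun i hi => by simpa [ne_of_mem_of_not_mem hi hjJ] using hJc i (List.mem_cons_of_mem _ hi))
      (by simp at hlen ⊢; omega)
    simp only [withCenter_cons, List.cons_append, List.nil_append, run, faults, hstep, hcenter,
      ihrun, ihfaults]
    simp [Nat.add_comm]

theorem fwf_flush_then_fill {k a : ℕ} {c J : List ℕ} (hac : a ∉ c) (hc : c = [] ∨ c.length = k)
    (hJ : (0 :: a :: J).Nodup) (hlen : J.length + 2 ≤ k) :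
    run (fwfStep k) c (withCenter (a :: J)) = J.reverse ++ [0, a] ∧
      faults (fwfStep k) c (withCenter (a :: J)) = J.length + 2 := by
  obtain ⟨⟨h0a, h0J⟩, haJ, hJ⟩ : (0 ≠ a ∧ 0 ∉ J) ∧ a ∉ J ∧ J.Nodup := by simpa using hJ
  have hflush : fwfStep k c a = ([a], true) := by
    rcases hc with rfl | hc
    · simp [fwfStep]
    · simp [fwfStep, hac, hc]
  have hcenter : fwfStep k [a] 0 = ([0, a], true) := by
    simp [fwfStep, h0a]
    omega
  obtain ⟨hrun, hfaults⟩ := fwf_fill k (c := [0, a]) (by simp) hJ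
    (fun i hi => by simp [ne_of_mem_of_not_mem hi h0J, ne_of_mem_of_not_mem hi haJ])
    (by simp; omega)
  simp only [withCenter_cons, List.cons_append, List.nil_append, run, faults, hflush, hcenter,
    hrun, hfaults]
  simp; omega

theorem starP_eq (m : ℕ) : starP (m + 2) = withCenter (1 :: List.range' 2 m) := by
  rw [starP, show m + 2 - 1 = m + 1 by omega, List.range'_succ]
  rfl

theorem starB1_eq (m : ℕ) :
    starB1 (m + 2) = withCenter ((m + 2) :: (List.range' 2 m).reverse) := by
  rw [starB1, show m + 2 - 1 = m + 1 by omega, List.range'_concat, List.reverse_append,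
    show 2 + 1 * m = m + 2 by omega]
  rfl

theorem length_starSeq9 (m n : ℕ) : (starSeq9 (m + 2) n).length = 2 * (m + 1) * (2 * n + 1) := by
  simp [starSeq9, starB1_eq, starP_eq, repeatList, length_withCenter, List.length_flatten]
  ring

def lruCacheAfterP (m : ℕ) : List ℕ := 0 :: ((List.range' 2 m).reverse ++ [1])

def fwfCacheAfterP (m : ℕ) : List ℕ := (List.range' 2 m).reverse ++ [0, 1]

theorem lru_starP (m : ℕ) :
    run (lruStep (m + 2)) [] (starP (m + 2)) = lruCacheAfterP m ∧
      faults (lruStep (m + 2)) [] (starP (m + 2)) = m + 2 := by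
  have hfirst : run (lruStep (m + 2)) [] [1, 0] = [0, 1] ∧
      faults (lruStep (m + 2)) [] [1, 0] = 2 := by
    simp [run, faults, lruStep]
  obtain ⟨hcenter_run, hcenter_faults⟩ := lru_withCenter m [1] (List.range' 2 m)
    (fun i hi => by simp [List.mem_range'_1] at hi; omega)
  obtain ⟨hfill_run, hfill_faults⟩ := lru_fill (m + 1) (l := [1]) (J := List.range' 2 m)
    List.nodup_range' (fun i hi => by simp [List.mem_range'_1] at hi ⊢; omega) (by simp; omega)
  rw [starP_eq, withCenter_cons, run_append, faults_append, hfirst.1, hfirst.2, hcenter_run,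
    hcenter_faults, hfill_run, hfill_faults]
  exact ⟨rfl, by simp; omega⟩

theorem lru_starB1_starP (m : ℕ) :
    run (lruStep (m + 2)) (lruCacheAfterP m) (starB1 (m + 2) ++ starP (m + 2)) = lruCacheAfterP m ∧
      faults (lruStep (m + 2)) (lruCacheAfterP m) (starB1 (m + 2) ++ starP (m + 2)) = 2 := by
  obtain ⟨hcenter_run, hcenter_faults⟩ := lru_withCenter m ((List.range' 2 m).reverse ++ [1])
    ((m + 2) :: (List.range' 2 m).reverse ++ 1 :: List.range' 2 m)
    (fun i hi => by simp [List.mem_range'_1] at hi; omega)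
  obtain ⟨hB1_run, hB1_faults⟩ := lru_miss_then_hits (K := m + 1) (b := 1)
    (J := (List.range' 2 m).reverse) (a := m + 2) (by simp [List.nodup_range']; omega) (by omega)
    (by simp)
  obtain ⟨hP_run, hP_faults⟩ := lru_miss_then_hits (K := m + 1) (b := m + 2)
    (J := List.range' 2 m) (a := 1) (by simp [List.nodup_range']) (by omega) (by simp)
  rw [List.reverse_reverse] at hB1_run
  rw [lruCacheAfterP, starB1_eq, starP_eq, ← withCenter_append, hcenter_run, hcenter_faults,
    run_append, faults_append, hB1_run, hB1_faults, hP_run, hP_faults]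
  exact ⟨rfl, rfl⟩

theorem lruCost_starSeq9 (m n : ℕ) : lruCost (m + 2) (starSeq9 (m + 2) n) = 2 * n + (m + 2) := by
  obtain ⟨hP_run, hP_faults⟩ := lru_starP m
  obtain ⟨hperiod_run, hperiod_faults⟩ := lru_starB1_starP m
  rw [lruCost, runCost_eq_faults, starSeq9, faults_append, hP_run, hP_faults,
    (run_faults_repeatList _ hperiod_run hperiod_faults n).2]
  ring

theorem fwf_starP {m : ℕ} {c : List ℕ} (h1c : 1 ∉ c) (hc : c = [] ∨ c.length = m + 2) :
    run (fwfStep (m + 2)) c (starP (m + 2)) = fwfCacheAfterP m ∧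
      faults (fwfStep (m + 2)) c (starP (m + 2)) = m + 2 := by
  rw [starP_eq, fwfCacheAfterP]
  simpa using fwf_flush_then_fill (J := List.range' 2 m) h1c hc
    (by simp [List.nodup_range', List.mem_range'_1]) (by simp)

theorem fwf_starB1 {m : ℕ} {c : List ℕ} (hc : m + 2 ∉ c) (hlen : c.length = m + 2) :
    run (fwfStep (m + 2)) c (starB1 (m + 2)) = List.range' 2 m ++ [0, m + 2] ∧
      faults (fwfStep (m + 2)) c (starB1 (m + 2)) = m + 2 := by
  rw [starB1_eq]
  simpa using fwf_flush_then_fill (J := (List.range' 2 m).reverse) hc (Or.inr hlen)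
    (by simp [List.nodup_range', List.mem_range'_1]; omega) (by simp)

theorem fwf_starB1_starP (m : ℕ) :
    run (fwfStep (m + 2)) (fwfCacheAfterP m) (starB1 (m + 2) ++ starP (m + 2)) = fwfCacheAfterP m ∧
      faults (fwfStep (m + 2)) (fwfCacheAfterP m) (starB1 (m + 2) ++ starP (m + 2))
        = 2 * (m + 2) := by
  obtain ⟨hB1_run, hB1_faults⟩ := fwf_starB1 (m := m) (c := fwfCacheAfterP m)
    (by simp [fwfCacheAfterP, List.mem_range'_1]; omega) (by simp [fwfCacheAfterP])
  obtain ⟨hP_run, hP_faults⟩ := fwf_starP (m := m) (c := List.range' 2 m ++ [0, m + 2])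
    (by simp [List.mem_range'_1]) (Or.inr (by simp))
  rw [run_append, faults_append, hB1_run, hB1_faults, hP_run, hP_faults]
  exact ⟨rfl, by ring⟩

theorem fwfCost_starSeq9 (m n : ℕ) :
    fwfCost (m + 2) (starSeq9 (m + 2) n) = 2 * (m + 2) * n + (m + 2) := by
  obtain ⟨hP_run, hP_faults⟩ := fwf_starP (m := m) (c := []) (by simp) (Or.inl rfl)
  obtain ⟨hperiod_run, hperiod_faults⟩ := fwf_starB1_starP m
  rw [fwfCost, runCost_eq_faults, starSeq9, faults_append, hP_run, hP_faults,
    (run_faults_repeatList _ hperiod_run hperiod_faults n).2]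
  ring

end StarPaging

open StarPaging

open Filter in
theorem stmt9_general (k : ℕ) (hk : 2 ≤ k) :
    (∀ n, lruCost k (starSeq9 k n) = 2 * n + k ∧
      fwfCost k (starSeq9 k n) = 2 * k * n + k) ∧
    Tendsto
      (fun n : ℕ =>
        ((fwfCost k (starSeq9 k n) : ℝ) - (lruCost k (starSeq9 k n) : ℝ)) /
          ((starSeq9 k n).length : ℝ))
      atTop (nhds (1 / 2)) := by
  obtain ⟨m, rfl⟩ : ∃ m, k = m + 2 := ⟨k - 2, by omega⟩
  refine ⟨fun n => ⟨lruCost_starSeq9 m n, fwfCost_starSeq9 m n⟩, ?_⟩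
  have hlim := tendsto_add_mul_div_add_mul_atTop_nhds (0 : ℝ) (2 * (m + 1)) (2 * (m + 1))
    (d := 4 * (m + 1)) (by positivity)
  rw [show (2 * (m + 1) : ℝ) / (4 * (m + 1)) = 1 / 2 by field_simp; ring] at hlim
  refine hlim.congr fun n => ?_
  rw [lruCost_starSeq9, fwfCost_starSeq9, length_starSeq9]
  push_cast
  ring

open Filter in
/-- On the star graph, LRU faults exactly on the first request of each `B_i`
(plus `k` faults on `P`), so `LRU(I_n) = 2n + k`, while `FWF(I_n) = 2kn + k`,
giving `(FWF(I_n) − LRU(I_n))/|I_n| → 1/2`. -/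
theorem stmt9 (k N : ℕ) (hk : 2 ≤ k) (hN : k + 1 ≤ N) :
    (∀ n, lruCost k (starSeq9 k n) = 2 * n + k ∧
      fwfCost k (starSeq9 k n) = 2 * k * n + k) ∧
    Tendsto
      (fun n : ℕ =>
        ((fwfCost k (starSeq9 k n) : ℝ) - (lruCost k (starSeq9 k n) : ℝ)) /
          ((starSeq9 k n).length : ℝ))
      atTop (nhds (1 / 2)) :=
  stmt9_general k hk
end

section
/- With x = ⌊log₂(N/r)⌋ and X_r = r(x−1) + ⌈N/2^x⌉, one has r·x + (⌈N/2^x⌉ − r) = X_r and 1 ≤ X_r ≤ k, where N = k + r and 1 ≤ r ≤ k − 1. -/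
/-- Ceiling division of naturals: `⌈a / b⌉`. -/
def ceilDivNat (a b : ℕ) : ℕ := (a + b - 1) / b

/-!
Since `2 ^ x ≤ N / r`, we have `r * 2 ^ x ≤ N`, hence `r ≤ ⌈N / 2 ^ x⌉`; this makes the truncated
subtractions harmless and gives `X_r ≥ r ≥ 1`. For the upper bound, `2 * x ≤ 2 ^ x` yields
`2 * (r * x) ≤ N`, so `N - r * x ≥ N / 2 ≥ N / 2 ^ x` and therefore `r * x + ⌈N / 2 ^ x⌉ ≤ N = k + r`;
subtracting `r` gives `X_r ≤ k`.
-/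

lemma ceilDivNat_le_of_le_mul {a b q : ℕ} (hb : 0 < b) (h : a ≤ b * q) : ceilDivNat a b ≤ q :=
  (ceilDiv_le_iff_le_mul hb).2 h

lemma le_ceilDivNat_of_mul_le {a b c : ℕ} (hb : 0 < b) (h : c * b ≤ a) : c ≤ ceilDivNat a b :=
  ((Nat.le_div_iff_mul_le hb).2 h).trans (Nat.div_le_div_right (by omega))

lemma mul_pow_log_div_le (b : ℕ) {r N : ℕ} (h : r ≤ N) (hr : 0 < r) :
    r * b ^ Nat.log b (N / r) ≤ N := by
  rw [mul_comm, ← Nat.le_div_iff_mul_le hr]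
  exact Nat.pow_log_le_self b (Nat.div_pos h hr).ne'

lemma mul_add_ceilDivNat_two_pow_le {r x N : ℕ} (hx : 1 ≤ x) (h : r * 2 ^ x ≤ N) :
    r * x + ceilDivNat N (2 ^ x) ≤ N := by
  have hrx : 2 * (r * x) ≤ N :=
    calc 2 * (r * x) = r * (2 * x) := by ring
      _ ≤ r * 2 ^ x := Nat.mul_le_mul_left r (Nat.mul_le_pow (by decide) x)
      _ ≤ N := h
  have hc : ceilDivNat N (2 ^ x) ≤ N - r * x :=
    ceilDivNat_le_of_le_mul (by positivity) <|
      calc N ≤ 2 * (N - r * x) := by omega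
        _ ≤ 2 ^ x * (N - r * x) := Nat.mul_le_mul_right _ (Nat.le_self_pow (by omega) 2)
  omega

theorem stmt19_general (k r N : ℕ) (hr1 : 1 ≤ r) (hr2 : r ≤ k - 1)
    (hN : N = k + r) :
    r * Nat.log 2 (N / r) + (ceilDivNat N (2 ^ (Nat.log 2 (N / r))) - r) =
        r * (Nat.log 2 (N / r) - 1) + ceilDivNat N (2 ^ (Nat.log 2 (N / r))) ∧
      1 ≤ r * (Nat.log 2 (N / r) - 1) + ceilDivNat N (2 ^ (Nat.log 2 (N / r))) ∧
      r * (Nat.log 2 (N / r) - 1) + ceilDivNat N (2 ^ (Nat.log 2 (N / r))) ≤ k := by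
  set x := Nat.log 2 (N / r)
  have hrN : r * 2 ^ x ≤ N := mul_pow_log_div_le 2 (by omega) hr1
  have hx : 1 ≤ x := Nat.le_log_of_pow_le one_lt_two ((Nat.le_div_iff_mul_le hr1).2 (by omega))
  have hc : r ≤ ceilDivNat N (2 ^ x) := le_ceilDivNat_of_mul_le (by positivity) hrN
  have hsum : r * x + ceilDivNat N (2 ^ x) ≤ N := mul_add_ceilDivNat_two_pow_le hx hrN
  have hsub : r * (x - 1) = r * x - r := Nat.mul_sub_one r x
  have hrx : r ≤ r * x := Nat.le_mul_of_pos_right r hx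
  omega

/-- With `N = k + r`, `1 ≤ r ≤ k − 1`, `x = ⌊log₂ (N/r)⌋` and
`X_r = r(x−1) + ⌈N/2^x⌉`, one has `r·x + (⌈N/2^x⌉ − r) = X_r` and `1 ≤ X_r ≤ k`. -/
theorem stmt19 (k r N : ℕ) (hk : 2 ≤ k) (hr1 : 1 ≤ r) (hr2 : r ≤ k - 1)
    (hN : N = k + r) :
    r * Nat.log 2 (N / r) + (ceilDivNat N (2 ^ (Nat.log 2 (N / r))) - r) =
        r * (Nat.log 2 (N / r) - 1) + ceilDivNat N (2 ^ (Nat.log 2 (N / r))) ∧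
      1 ≤ r * (Nat.log 2 (N / r) - 1) + ceilDivNat N (2 ^ (Nat.log 2 (N / r))) ∧
      r * (Nat.log 2 (N / r) - 1) + ceilDivNat N (2 ^ (Nat.log 2 (N / r))) ≤ k :=
  stmt19_general k r N hr1 hr2 hN
end
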